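/- The Farey expansion Gauss map F, defined by F(x) = −1/x − 2 for x ∈ [−1, 0), F(0) = 0, and F(x) = 1/x − 1 for x ∈ (0, ∞), preserves the measure with density 1/((x+1)(x+2)) on [−1, ∞); that is, for every Borel set A ⊆ [−1, ∞), ∫_{F⁻¹(A)} dx/((x+1)(x+2)) = ∫_A dx/((x+1)(x+2)). -/

import Mathlib

/-!
`F` has two inverse branches, `ψ₋ y = -1/(y+2)` from `[-1,∞)` onto `[-1,0)` and
`ψ₊ y = 1/(y+1)` from `(-1,∞)` onto `(0,∞)`. By the change of variables formula the
`ρ(x) dx`-mass of `F⁻¹(A)` is `∫_A (|ψ₋'| ρ∘ψ₋ + |ψ₊'| ρ∘ψ₊)`, so invariance says that `ρ` is a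
fixed point of this transfer operator. For `ρ(x) = 1/((x+1)(x+2))` the two branches contribute
`1/((y+1)(2y+3))` and `1/((y+2)(2y+3))`, which add up to `ρ(y)`.
-/

open MeasureTheory

/-- The Farey expansion Gauss map on [-1,∞). -/
noncomputable def fareyGaussMap (x : ℝ) : ℝ :=
  if x < 0 then -1 / x - 2 else if x = 0 then 0 else 1 / x - 1

open Set
open scoped ENNReal

noncomputable def fareyBranchNeg (y : ℝ) : ℝ := -(y + 2)⁻¹

noncomputable def fareyBranchPos (y : ℝ) : ℝ := (y + 1)⁻¹

noncomputable def fareyDensity (x : ℝ) : ℝ := 1 / ((x + 1) * (x + 2))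

theorem measurable_fareyGaussMap : Measurable fareyGaussMap := by
  unfold fareyGaussMap
  refine Measurable.ite (measurableSet_lt measurable_id measurable_const) (by fun_prop) ?_
  exact Measurable.ite (measurableSet_eq_fun measurable_id measurable_const) measurable_const
    (by fun_prop)

theorem fareyGaussMap_of_neg {x : ℝ} (hx : x < 0) : fareyGaussMap x = -1 / x - 2 := if_pos hx

theorem fareyGaussMap_of_pos {x : ℝ} (hx : 0 < x) : fareyGaussMap x = 1 / x - 1 := by
  rw [fareyGaussMap, if_neg hx.not_gt, if_neg hx.ne']

theorem invOn_fareyBranchNeg :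
    InvOn fareyGaussMap fareyBranchNeg (Ici (-1)) (Ico (-1) 0) := by
  constructor
  · intro y (hy : -1 ≤ y)
    have : 0 < y + 2 := by linarith
    rw [fareyBranchNeg, fareyGaussMap_of_neg (neg_neg_of_pos (inv_pos.2 this))]
    field_simp
    ring
  · intro x ⟨_, hx⟩
    rw [fareyBranchNeg, fareyGaussMap_of_neg hx, sub_add_cancel, neg_div, one_div, inv_neg,
      neg_neg, inv_inv]

theorem invOn_fareyBranchPos :
    InvOn fareyGaussMap fareyBranchPos (Ioi (-1)) (Ioi 0) := by
  constructor
  · intro y (hy : -1 < y)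
    have : 0 < y + 1 := by linarith
    rw [fareyBranchPos, fareyGaussMap_of_pos (inv_pos.2 this)]
    field_simp
    ring
  · intro x (hx : 0 < x)
    rw [fareyBranchPos, fareyGaussMap_of_pos hx, sub_add_cancel, one_div, inv_inv]

theorem bijOn_fareyBranchNeg : BijOn fareyBranchNeg (Ici (-1)) (Ico (-1) 0) := by
  refine invOn_fareyBranchNeg.bijOn (fun y (hy : -1 ≤ y) => ?_) (fun x ⟨hx, hx0⟩ => ?_)
  · have : 0 < y + 2 := by linarith
    exact ⟨neg_le_neg (inv_le_one_of_one_le₀ (by linarith)), neg_neg_of_pos (inv_pos.2 this)⟩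
  · change -1 ≤ fareyGaussMap x
    rw [fareyGaussMap_of_neg hx0, le_sub_iff_add_le, le_div_iff_of_neg hx0]
    linarith

theorem bijOn_fareyBranchPos : BijOn fareyBranchPos (Ioi (-1)) (Ioi 0) := by
  refine invOn_fareyBranchPos.bijOn (fun y (hy : -1 < y) => ?_) (fun x (hx : 0 < x) => ?_)
  · exact inv_pos.2 (by linarith : (0 : ℝ) < y + 1)
  · change -1 < fareyGaussMap x
    rw [fareyGaussMap_of_pos hx]
    have : 0 < 1 / x := by positivity
    linarith

theorem preimage_fareyGaussMap_inter_Ico (A : Set ℝ) :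
    fareyGaussMap ⁻¹' A ∩ Ico (-1) 0 = fareyBranchNeg '' (A ∩ Ici (-1)) := by
  rw [invOn_fareyBranchNeg.1.image_inter', bijOn_fareyBranchNeg.image_eq]

theorem preimage_fareyGaussMap_inter_Ioi (A : Set ℝ) :
    fareyGaussMap ⁻¹' A ∩ Ioi 0 = fareyBranchPos '' (A ∩ Ioi (-1)) := by
  rw [invOn_fareyBranchPos.1.image_inter', bijOn_fareyBranchPos.image_eq]

theorem hasDerivAt_fareyBranchNeg {y : ℝ} (hy : y + 2 ≠ 0) :
    HasDerivAt fareyBranchNeg ((y + 2) ^ 2)⁻¹ y :=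
  (((hasDerivAt_id' y).add_const 2).inv hy).neg.congr_deriv (by ring)

theorem hasDerivAt_fareyBranchPos {y : ℝ} (hy : y + 1 ≠ 0) :
    HasDerivAt fareyBranchPos (-((y + 1) ^ 2)⁻¹) y :=
  (((hasDerivAt_id' y).add_const 1).inv hy).congr_deriv (by ring)

theorem setLIntegral_preimage_fareyGaussMap {A : Set ℝ} (hA : MeasurableSet A)
    {g : ℝ → ℝ≥0∞} (hg : Measurable g) :
    ∫⁻ x in fareyGaussMap ⁻¹' A ∩ Ici (-1), g x =
      ∫⁻ y in A ∩ Ioi (-1), (ENNReal.ofReal ((y + 2) ^ 2)⁻¹ * g (fareyBranchNeg y) +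
        ENNReal.ofReal ((y + 1) ^ 2)⁻¹ * g (fareyBranchPos y)) := by
  have hF := measurable_fareyGaussMap hA
  have hIoi : (A ∩ Ioi (-1) : Set ℝ) =ᵐ[volume] (A ∩ Ici (-1) : Set ℝ) :=
    ae_eq_set_inter ae_eq_rfl Ioi_ae_eq_Ici
  calc ∫⁻ x in fareyGaussMap ⁻¹' A ∩ Ici (-1), g x
      = (∫⁻ x in fareyGaussMap ⁻¹' A ∩ Ico (-1) 0, g x) +
          ∫⁻ x in fareyGaussMap ⁻¹' A ∩ Ioi 0, g x := by
        have hdisj : Disjoint (fareyGaussMap ⁻¹' A ∩ Ico (-1) 0) (fareyGaussMap ⁻¹' A ∩ Ici 0) :=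
          (Iio_disjoint_Ici le_rfl).mono (inter_subset_right.trans Ico_subset_Iio_self)
            inter_subset_right
        have hIci : (fareyGaussMap ⁻¹' A ∩ Ici 0 : Set ℝ) =ᵐ[volume]
            (fareyGaussMap ⁻¹' A ∩ Ioi 0 : Set ℝ) :=
          ae_eq_set_inter ae_eq_rfl Ioi_ae_eq_Ici.symm
        rw [← Ico_union_Ici_eq_Ici (by norm_num : (-1 : ℝ) ≤ 0), inter_union_distrib_left,
          lintegral_union (hF.inter measurableSet_Ici) hdisj, setLIntegral_congr hIci]
    _ = (∫⁻ y in A ∩ Ici (-1), ENNReal.ofReal |((y + 2) ^ 2)⁻¹| * g (fareyBranchNeg y)) +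
          ∫⁻ y in A ∩ Ioi (-1), ENNReal.ofReal |-((y + 1) ^ 2)⁻¹| * g (fareyBranchPos y) := by
        rw [preimage_fareyGaussMap_inter_Ico, preimage_fareyGaussMap_inter_Ioi,
          lintegral_image_eq_lintegral_abs_deriv_mul (hA.inter measurableSet_Ici)
            (fun y (hy : y ∈ A ∩ Ici (-1)) =>
              (hasDerivAt_fareyBranchNeg (by linarith [hy.2.out])).hasDerivWithinAt)
            (bijOn_fareyBranchNeg.injOn.mono inter_subset_right),
          lintegral_image_eq_lintegral_abs_deriv_mul (hA.inter measurableSet_Ioi)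
            (fun y (hy : y ∈ A ∩ Ioi (-1)) =>
              (hasDerivAt_fareyBranchPos (by linarith [hy.2.out])).hasDerivWithinAt)
            (bijOn_fareyBranchPos.injOn.mono inter_subset_right)]
    _ = _ := by
        simp only [abs_neg, abs_inv, abs_sq]
        rw [← setLIntegral_congr hIoi, ← lintegral_add_left]
        exact (ENNReal.measurable_ofReal.comp (by fun_prop)).mul
          (hg.comp (by unfold fareyBranchNeg; fun_prop))

theorem ofReal_fareyDensity_transfer {y : ℝ} (hy : -1 < y) :
    ENNReal.ofReal ((y + 2) ^ 2)⁻¹ * ENNReal.ofReal (fareyDensity (fareyBranchNeg y)) +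
      ENNReal.ofReal ((y + 1) ^ 2)⁻¹ * ENNReal.ofReal (fareyDensity (fareyBranchPos y)) =
      ENNReal.ofReal (fareyDensity y) := by
  have h1 : 0 < y + 1 := by linarith
  have h2 : 0 < y + 2 := by linarith
  have h3 : 0 < 2 * y + 3 := by linarith
  have hneg : ((y + 2) ^ 2)⁻¹ * fareyDensity (fareyBranchNeg y) = ((y + 1) * (2 * y + 3))⁻¹ := by
    have e1 : -(y + 2)⁻¹ + 1 = (y + 1) / (y + 2) := by field_simp; ring
    have e2 : -(y + 2)⁻¹ + 2 = (2 * y + 3) / (y + 2) := by field_simp; ring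
    rw [fareyDensity, fareyBranchNeg, e1, e2]
    field_simp
  have hpos : ((y + 1) ^ 2)⁻¹ * fareyDensity (fareyBranchPos y) = ((y + 2) * (2 * y + 3))⁻¹ := by
    have e1 : (y + 1)⁻¹ + 1 = (y + 2) / (y + 1) := by field_simp; ring
    have e2 : (y + 1)⁻¹ + 2 = (2 * y + 3) / (y + 1) := by field_simp; ring
    rw [fareyDensity, fareyBranchPos, e1, e2]
    field_simp
  rw [← ENNReal.ofReal_mul (by positivity), ← ENNReal.ofReal_mul (by positivity), hneg, hpos,
    ← ENNReal.ofReal_add (by positivity) (by positivity)]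
  congr 1
  rw [fareyDensity, ← one_div, ← one_div, div_add_div _ _ (by positivity) (by positivity),
    div_eq_div_iff (by positivity) (by positivity)]
  ring

/-- The Farey expansion Gauss map preserves the measure with density
1/((x+1)(x+2)) on [-1,∞). -/
theorem fareyGaussMap_invariant_measure :
    ∀ A : Set ℝ, MeasurableSet A → A ⊆ Set.Ici (-1 : ℝ) →
      ∫⁻ x in fareyGaussMap ⁻¹' A ∩ Set.Ici (-1 : ℝ),
        ENNReal.ofReal (1 / ((x + 1) * (x + 2))) =
      ∫⁻ x in A, ENNReal.ofReal (1 / ((x + 1) * (x + 2))) := by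
  intro A hA hAsub
  have hdensity : Measurable fun x => ENNReal.ofReal (fareyDensity x) :=
    ENNReal.measurable_ofReal.comp (by unfold fareyDensity; fun_prop)
  have hIoi : (A ∩ Ioi (-1) : Set ℝ) =ᵐ[volume] A := by
    conv_rhs => rw [← inter_eq_left.2 hAsub]
    exact ae_eq_set_inter ae_eq_rfl Ioi_ae_eq_Ici
  calc _ = ∫⁻ y in A ∩ Ioi (-1),
          (ENNReal.ofReal ((y + 2) ^ 2)⁻¹ * ENNReal.ofReal (fareyDensity (fareyBranchNeg y)) +
            ENNReal.ofReal ((y + 1) ^ 2)⁻¹ * ENNReal.ofReal (fareyDensity (fareyBranchPos y))) :=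
        setLIntegral_preimage_fareyGaussMap hA hdensity
    _ = ∫⁻ y in A ∩ Ioi (-1), ENNReal.ofReal (fareyDensity y) :=
        setLIntegral_congr_fun (hA.inter measurableSet_Ioi) fun y hy =>
          ofReal_fareyDensity_transfer hy.2
    _ = _ := setLIntegral_congr hIoi
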